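/- Let A : ℝ → Matrix (n×n, ℝ) be twice differentiable at t₀ with A(t) symmetric for all t in a neighborhood of t₀, and let λ : ℝ → ℝ and u : ℝ → ℝⁿ be twice differentiable at t₀ and satisfy A(t)·u(t) = λ(t)·u(t) and ‖u(t)‖ = 1 for all t in a neighborhood of t₀. Suppose (v₁, …, vₙ) is an orthonormal basis of ℝⁿ with A(t₀)·vⱼ = μⱼ·vⱼ for pairwise distinct real numbers μ₁, …, μₙ, and suppose u(t₀) = v_k and λ(t₀) = μ_k for some index k. Then λ″(t₀) = ⟨v_k, A″(t₀)·v_k⟩ + 2·Σ_{j ≠ k} ⟨vⱼ, A′(t₀)·v_k⟩² / (μ_k − μⱼ). -/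

import Mathlib

/-!
Differentiating `A u = λ u` twice at `t₀` and pairing with `v_k` gives
`λ'' = ⟪v_k, A'' v_k⟫ + 2 ⟪v_k, A' u'⟫`: the terms in `u''` cancel because `A(t₀)` is symmetric
with eigenvector `v_k`, and those in `λ'` vanish because `⟪u, u'⟫ = 0` on the unit sphere.
Pairing the first derivative `A' u + A u' = λ' u + λ u'` with `v_j`, `j ≠ k`, gives the
coordinates `⟪v_j, u'⟫ = ⟪v_j, A' v_k⟫ / (μ_k - μ_j)`, and since `A'` is again symmetric,
Parseval's identity in the basis `v` turns `⟪v_k, A' u'⟫ = ⟪A' v_k, u'⟫` into the sum.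
-/

open scoped InnerProductSpace

attribute [local instance] Matrix.normedAddCommGroup Matrix.normedSpace

open Filter Topology

theorem HasDerivAt.unique_of_eventuallyEq {𝕜 F : Type*} [NontriviallyNormedField 𝕜]
    [NormedAddCommGroup F] [NormedSpace 𝕜 F] {f g : 𝕜 → F} {f' g' : F} {t : 𝕜}
    (hf : HasDerivAt f f' t) (hg : HasDerivAt g g' t) (h : f =ᶠ[𝓝 t] g) : f' = g' :=
  (h.hasDerivAt_iff.mp hf).unique hg

section Variation

variable {E : Type*} [NormedAddCommGroup E] [NormedSpace ℝ E]
  {T T' : ℝ → E →L[ℝ] E} {T'' : E →L[ℝ] E} {lam lam' : ℝ → ℝ} {lam'' : ℝ}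
  {u u' : ℝ → E} {u'' : E} {t₀ : ℝ}

theorem eventually_deriv_eigen_eq (hT : ∀ᶠ t in 𝓝 t₀, HasDerivAt T (T' t) t)
    (hlam : ∀ᶠ t in 𝓝 t₀, HasDerivAt lam (lam' t) t) (hu : ∀ᶠ t in 𝓝 t₀, HasDerivAt u (u' t) t)
    (heig : ∀ᶠ t in 𝓝 t₀, T t (u t) = lam t • u t) :
    ∀ᶠ t in 𝓝 t₀, T' t (u t) + T t (u' t) = lam' t • u t + lam t • u' t := by
  filter_upwards [hT, hlam, hu, heig.eventually_nhds] with t hTt hlamt hut heigt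
  rw [add_comm (lam' t • u t)]
  exact (hTt.clm_apply hut).unique_of_eventuallyEq (hlamt.smul hut) heigt

theorem second_deriv_eigen_eq (hT : ∀ᶠ t in 𝓝 t₀, HasDerivAt T (T' t) t)
    (hT' : HasDerivAt T' T'' t₀) (hlam : ∀ᶠ t in 𝓝 t₀, HasDerivAt lam (lam' t) t)
    (hlam' : HasDerivAt lam' lam'' t₀) (hu : ∀ᶠ t in 𝓝 t₀, HasDerivAt u (u' t) t)
    (hu' : HasDerivAt u' u'' t₀) (heig : ∀ᶠ t in 𝓝 t₀, T t (u t) = lam t • u t) :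
    T'' (u t₀) + (2 : ℝ) • T' t₀ (u' t₀) + T t₀ u'' =
      lam'' • u t₀ + (2 * lam' t₀) • u' t₀ + lam t₀ • u'' := by
  have hL := (hT'.clm_apply hu.self_of_nhds).add (hT.self_of_nhds.clm_apply hu')
  have hR := (hlam'.smul hu.self_of_nhds).add (hlam.self_of_nhds.smul hu')
  have := hL.unique_of_eventuallyEq hR (eventually_deriv_eigen_eq hT hlam hu heig)
  linear_combination (norm := module) this

end Variation

section InnerProduct

variable {E : Type*} [NormedAddCommGroup E] [InnerProductSpace ℝ E]

theorem inner_eq_zero_of_hasDerivAt_of_norm_eq_one {u : ℝ → E} {w : E} {t₀ : ℝ}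
    (hu : HasDerivAt u w t₀) (hnorm : ∀ᶠ t in 𝓝 t₀, ‖u t‖ = 1) : ⟪u t₀, w⟫_ℝ = 0 := by
  have h := (hu.inner ℝ hu).unique_of_eventuallyEq (hasDerivAt_const t₀ (1 : ℝ)) <| by
    filter_upwards [hnorm] with t ht
    rw [real_inner_self_eq_norm_sq, ht, one_pow]
  rw [real_inner_comm (u t₀) w] at h
  linarith

theorem isSymmetric_of_hasDerivAt {T : ℝ → E →L[ℝ] E} {D : E →L[ℝ] E} {t₀ : ℝ}
    (hT : HasDerivAt T D t₀) (hsymm : ∀ᶠ t in 𝓝 t₀, (T t : E →ₗ[ℝ] E).IsSymmetric) :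
    (D : E →ₗ[ℝ] E).IsSymmetric := by
  intro x y
  let L : (E →L[ℝ] E) →L[ℝ] ℝ :=
    (innerSL ℝ y).comp (.apply ℝ E x) - (innerSL ℝ x).comp (.apply ℝ E y)
  have h := (L.hasFDerivAt.comp_hasDerivAt t₀ hT).unique_of_eventuallyEq
    (hasDerivAt_const t₀ (0 : ℝ)) <| by
      filter_upwards [hsymm] with t ht
      simpa [L, sub_eq_zero, real_inner_comm y] using ht.apply_clm x y
  simpa [L, real_inner_comm, sub_eq_zero] using h

variable {ι : Type*} [Fintype ι] (b : OrthonormalBasis ι ℝ E) {μ : ι → ℝ}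
  {S : E →L[ℝ] E}

theorem inner_apply_of_eigenbasis (hS : (S : E →ₗ[ℝ] E).IsSymmetric)
    (hb : ∀ j, S (b j) = μ j • b j) (j : ι) (x : E) : ⟪b j, S x⟫_ℝ = μ j * ⟪b j, x⟫_ℝ := by
  rw [← hS.apply_clm, hb, real_inner_smul_left]

variable [DecidableEq ι] {k : ι} {D : E →L[ℝ] E} {w : E} {c : ℝ}

theorem inner_eq_div_of_first_variation (hS : (S : E →ₗ[ℝ] E).IsSymmetric)
    (hb : ∀ j, S (b j) = μ j • b j) (hfirst : D (b k) + S w = c • b k + μ k • w)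
    {j : ι} (hjk : j ≠ k) (hμ : μ j ≠ μ k) :
    ⟪b j, w⟫_ℝ = ⟪b j, D (b k)⟫_ℝ / (μ k - μ j) := by
  have h := congrArg (⟪b j, ·⟫_ℝ) hfirst
  simp only [inner_add_right, real_inner_smul_right, inner_apply_of_eigenbasis b hS hb,
    b.inner_eq_ite, if_neg hjk] at h
  rw [eq_div_iff (sub_ne_zero.mpr hμ.symm)]
  linarith

theorem inner_apply_eq_sum_of_first_variation (hS : (S : E →ₗ[ℝ] E).IsSymmetric)
    (hb : ∀ j, S (b j) = μ j • b j) (hsimple : ∀ j ≠ k, μ j ≠ μ k)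
    (hD : (D : E →ₗ[ℝ] E).IsSymmetric) (hfirst : D (b k) + S w = c • b k + μ k • w)
    (hwk : ⟪b k, w⟫_ℝ = 0) :
    ⟪b k, D w⟫_ℝ = ∑ j ∈ Finset.univ.erase k, ⟪b j, D (b k)⟫_ℝ ^ 2 / (μ k - μ j) := by
  rw [← hD.apply_clm, ← b.sum_inner_mul_inner,
    ← Finset.add_sum_erase _ _ (Finset.mem_univ k), hwk, mul_zero, zero_add]
  refine Finset.sum_congr rfl fun j hj => ?_
  have hjk := Finset.ne_of_mem_erase hj
  rw [inner_eq_div_of_first_variation b hS hb hfirst hjk (hsimple j hjk), real_inner_comm]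
  ring

end InnerProduct

theorem second_deriv_simple_eigenvalue_eq {E ι : Type*} [NormedAddCommGroup E]
    [InnerProductSpace ℝ E] [Fintype ι] [DecidableEq ι] (b : OrthonormalBasis ι ℝ E) (μ : ι → ℝ)
    (k : ι) {T T' : ℝ → E →L[ℝ] E} {T'' : E →L[ℝ] E} {lam lam' : ℝ → ℝ} {lam'' : ℝ}
    {u u' : ℝ → E} {u'' : E} {t₀ : ℝ}
    (hT : ∀ᶠ t in 𝓝 t₀, HasDerivAt T (T' t) t) (hT' : HasDerivAt T' T'' t₀)
    (hsymm : ∀ᶠ t in 𝓝 t₀, (T t : E →ₗ[ℝ] E).IsSymmetric)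
    (hlam : ∀ᶠ t in 𝓝 t₀, HasDerivAt lam (lam' t) t) (hlam' : HasDerivAt lam' lam'' t₀)
    (hu : ∀ᶠ t in 𝓝 t₀, HasDerivAt u (u' t) t) (hu' : HasDerivAt u' u'' t₀)
    (heig : ∀ᶠ t in 𝓝 t₀, T t (u t) = lam t • u t) (hnorm : ∀ᶠ t in 𝓝 t₀, ‖u t‖ = 1)
    (hb : ∀ j, T t₀ (b j) = μ j • b j) (hsimple : ∀ j ≠ k, μ j ≠ μ k)
    (huk : u t₀ = b k) (hlamk : lam t₀ = μ k) :
    lam'' = ⟪b k, T'' (b k)⟫_ℝ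
      + 2 * ∑ j ∈ Finset.univ.erase k, ⟪b j, T' t₀ (b k)⟫_ℝ ^ 2 / (μ k - μ j) := by
  have hfirst : T' t₀ (b k) + T t₀ (u' t₀) = lam' t₀ • b k + μ k • u' t₀ := by
    simpa only [huk, hlamk] using (eventually_deriv_eigen_eq hT hlam hu heig).self_of_nhds
  have hsecond := second_deriv_eigen_eq hT hT' hlam hlam' hu hu' heig
  rw [huk, hlamk] at hsecond
  have hwk : ⟪b k, u' t₀⟫_ℝ = 0 :=
    huk ▸ inner_eq_zero_of_hasDerivAt_of_norm_eq_one hu.self_of_nhds hnorm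
  have hsum := inner_apply_eq_sum_of_first_variation b hsymm.self_of_nhds hb hsimple
    (isSymmetric_of_hasDerivAt hT.self_of_nhds hsymm) hfirst hwk
  have h := congrArg (⟪b k, ·⟫_ℝ) hsecond
  simp only [inner_add_right, real_inner_smul_right,
    inner_apply_of_eigenbasis b hsymm.self_of_nhds hb, b.inner_eq_ite, if_pos, hwk, hsum] at h
  linarith

section Matrix

variable {m : Type*} [Fintype m] [DecidableEq m]

theorem Matrix.hasDerivAt_toEuclideanCLM {A : ℝ → Matrix m m ℝ} {A' : Matrix m m ℝ} {t : ℝ}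
    (hA : HasDerivAt A A' t) :
    HasDerivAt (fun s => toEuclideanCLM (𝕜 := ℝ) (A s)) (toEuclideanCLM (𝕜 := ℝ) A') t :=
  let L : Matrix m m ℝ →L[ℝ] EuclideanSpace ℝ m →L[ℝ] EuclideanSpace ℝ m :=
    LinearMap.toContinuousLinearMap (toEuclideanCLM (n := m) (𝕜 := ℝ)).toAlgEquiv.toLinearMap
  L.hasFDerivAt.comp_hasDerivAt t hA

theorem Matrix.IsSymm.isSymmetric_toEuclideanCLM {A : Matrix m m ℝ} (hA : A.IsSymm) :
    (toEuclideanCLM (𝕜 := ℝ) A : EuclideanSpace ℝ m →ₗ[ℝ] _).IsSymmetric := by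
  rw [coe_toEuclideanCLM_eq_toEuclideanLin, isSymmetric_toEuclideanLin_iff, isHermitian_iff_isSymm]
  exact hA

theorem Matrix.toEuclideanCLM_apply_eq_smul_iff {A : Matrix m m ℝ} {x : EuclideanSpace ℝ m}
    {c : ℝ} :
    toEuclideanCLM (𝕜 := ℝ) A x = c • x ↔ A.mulVec x = c • x := by
  rw [← (WithLp.ofLp_injective 2).eq_iff, ofLp_toEuclideanCLM, WithLp.ofLp_smul]

end Matrix

theorem stmt_5_general (n : ℕ) (A : ℝ → Matrix (Fin n) (Fin n) ℝ)
    (A' : ℝ → Matrix (Fin n) (Fin n) ℝ) (A'' : Matrix (Fin n) (Fin n) ℝ)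
    (lam lam' : ℝ → ℝ) (lam'' : ℝ)
    (u u' : ℝ → EuclideanSpace ℝ (Fin n)) (u'' : EuclideanSpace ℝ (Fin n)) (t₀ : ℝ)
    (hA : ∀ᶠ t in nhds t₀, HasDerivAt A (A' t) t)
    (hA' : HasDerivAt A' A'' t₀)
    (hsymm : ∀ᶠ t in nhds t₀, (A t).IsSymm)
    (hlam : ∀ᶠ t in nhds t₀, HasDerivAt lam (lam' t) t)
    (hlam' : HasDerivAt lam' lam'' t₀)
    (hu : ∀ᶠ t in nhds t₀, HasDerivAt u (u' t) t)
    (hu' : HasDerivAt u' u'' t₀)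
    (heig : ∀ᶠ t in nhds t₀, (A t).mulVec (u t) = lam t • u t)
    (hnorm : ∀ᶠ t in nhds t₀, ‖u t‖ = 1)
    (v : Fin n → EuclideanSpace ℝ (Fin n)) (μ : Fin n → ℝ)
    (hON : Orthonormal ℝ v)
    (hv : ∀ j, (A t₀).mulVec (v j) = μ j • v j)
    (hdist : Function.Injective μ)
    (k : Fin n) (huk : u t₀ = v k) (hlamk : lam t₀ = μ k) :
    lam'' = ⟪v k, WithLp.toLp 2 (A''.mulVec (v k))⟫_ℝ
      + 2 * ∑ j ∈ Finset.univ.erase k, ⟪v j, WithLp.toLp 2 ((A' t₀).mulVec (v k))⟫_ℝ ^ 2 / (μ k - μ j) := by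
  obtain ⟨b, rfl⟩ : ∃ b : OrthonormalBasis (Fin n) ℝ (EuclideanSpace ℝ (Fin n)), ⇑b = v :=
    ⟨_, OrthonormalBasis.coe_mk hON
      (hON.linearIndependent.span_eq_top_of_card_eq_finrank' (by simp)).ge⟩
  exact second_deriv_simple_eigenvalue_eq b μ k
    (T := fun t => Matrix.toEuclideanCLM (𝕜 := ℝ) (A t))
    (T' := fun t => Matrix.toEuclideanCLM (𝕜 := ℝ) (A' t))
    (hA.mono fun _ => Matrix.hasDerivAt_toEuclideanCLM) (Matrix.hasDerivAt_toEuclideanCLM hA')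
    (hsymm.mono fun _ => Matrix.IsSymm.isSymmetric_toEuclideanCLM) hlam hlam' hu hu'
    (heig.mono fun _ => Matrix.toEuclideanCLM_apply_eq_smul_iff.mpr) hnorm
    (fun j => Matrix.toEuclideanCLM_apply_eq_smul_iff.mpr (hv j))
    (fun _ => hdist.ne) huk hlamk

/-- Second-order perturbation formula (eigenvalue repulsion):
`λ″(t₀) = ⟨v_k, A″(t₀)v_k⟩ + 2 Σ_{j ≠ k} ⟨vⱼ, A′(t₀)v_k⟩² / (μ_k − μⱼ)`. -/
theorem stmt_5 (n : ℕ) (A : ℝ → Matrix (Fin n) (Fin n) ℝ)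
    (A' : ℝ → Matrix (Fin n) (Fin n) ℝ) (A'' : Matrix (Fin n) (Fin n) ℝ)
    (lam lam' : ℝ → ℝ) (lam'' : ℝ)
    (u u' : ℝ → EuclideanSpace ℝ (Fin n)) (u'' : EuclideanSpace ℝ (Fin n)) (t₀ : ℝ)
    (hA : ∀ᶠ t in nhds t₀, HasDerivAt A (A' t) t)
    (hA' : HasDerivAt A' A'' t₀)
    (hsymm : ∀ᶠ t in nhds t₀, (A t).IsSymm)
    (hlam : ∀ᶠ t in nhds t₀, HasDerivAt lam (lam' t) t)
    (hlam' : HasDerivAt lam' lam'' t₀)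
    (hu : ∀ᶠ t in nhds t₀, HasDerivAt u (u' t) t)
    (hu' : HasDerivAt u' u'' t₀)
    (heig : ∀ᶠ t in nhds t₀, (A t).mulVec (u t) = lam t • u t)
    (hnorm : ∀ᶠ t in nhds t₀, ‖u t‖ = 1)
    (v : Fin n → EuclideanSpace ℝ (Fin n)) (μ : Fin n → ℝ)
    (hON : Orthonormal ℝ v) (hbasis : ⊤ ≤ Submodule.span ℝ (Set.range v))
    (hv : ∀ j, (A t₀).mulVec (v j) = μ j • v j)
    (hdist : Function.Injective μ)
    (k : Fin n) (huk : u t₀ = v k) (hlamk : lam t₀ = μ k) :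
    lam'' = ⟪v k, WithLp.toLp 2 (A''.mulVec (v k))⟫_ℝ
      + 2 * ∑ j ∈ Finset.univ.erase k, ⟪v j, WithLp.toLp 2 ((A' t₀).mulVec (v k))⟫_ℝ ^ 2 / (μ k - μ j) :=
  stmt_5_general n A A' A'' lam lam' lam'' u u' u'' t₀ hA hA' hsymm hlam hlam' hu hu' heig hnorm v μ
    hON hv hdist k huk hlamk
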